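/- arXiv:1504.06381 — 3 statements merged into one kernel-verified Lean document; each statement's English description precedes it below -/
import Mathlib

section
/- Let V be a nonassociative algebra (with bilinear multiplication) and φ an invertible locally finite algebra automorphism of V, with Jordan–Chevalley-type decomposition φ = σ ∘ exp(-2πi N) into commuting semisimple σ and locally nilpotent N. Then σ is an algebra automorphism of V and N is a derivation of V. -/
def LocFin {V : Type*} [AddCommGroup V] [Module ℂ V] (φ : Module.End ℂ V) : Prop :=
  ∀ a : V, ∃ U : Submodule ℂ V, FiniteDimensional ℂ U ∧ (∀ x ∈ U, φ x ∈ U) ∧ a ∈ U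

def LocNilp {V : Type*} [AddCommGroup V] [Module ℂ V] (N : Module.End ℂ V) : Prop :=
  ∀ a : V, ∃ l : ℕ, 1 ≤ l ∧ (N ^ l) a = 0

def IsDiag {V : Type*} [AddCommGroup V] [Module ℂ V] (σ : Module.End ℂ V) : Prop :=
  ∀ a : V, a ∈ Submodule.span ℂ {v : V | ∃ μ : ℂ, σ v = μ • v}

open Finset in
lemma aux_vandermonde {V : Type*} [AddCommGroup V] [Module ℂ V] {L : ℕ} (x : ℕ → V)
    (h : ∀ m : ℕ, ∑ n ∈ Finset.range L, ((m : ℂ) ^ n) • x n = 0) :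
    ∀ n, n < L → x n = 0 := by
  intro n hn
  rw [← Module.forall_dual_apply_eq_zero_iff ℂ]
  intro f
  set p : Polynomial ℂ := ∑ i ∈ Finset.range L, Polynomial.C (f (x i)) * Polynomial.X ^ i with hp
  have hroot : ∀ m : ℕ, p.IsRoot (m : ℂ) := by
    intro m
    have h2 := congrArg f (h m)
    simp only [map_sum, map_smul, map_zero, smul_eq_mul] at h2
    simp only [Polynomial.IsRoot, hp, Polynomial.eval_finset_sum, Polynomial.eval_mul,
      Polynomial.eval_C, Polynomial.eval_pow, Polynomial.eval_X]
    rw [← h2]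
    exact Finset.sum_congr rfl fun i _ => mul_comm _ _
  have hp0 : p = 0 := by
    apply Polynomial.eq_zero_of_infinite_isRoot
    apply Set.Infinite.mono (s := Set.range (Nat.cast : ℕ → ℂ))
    · rintro - ⟨m, rfl⟩; exact hroot m
    · exact Set.infinite_range_of_injective Nat.cast_injective
  have hc : p.coeff n = f (x n) := by
    rw [hp]
    simp only [Polynomial.finset_sum_coeff, Polynomial.coeff_C_mul, Polynomial.coeff_X_pow,
      mul_ite, mul_one, mul_zero]
    rw [Finset.sum_ite_eq (Finset.range L) n (fun i => f (x i)),
      if_pos (Finset.mem_range.mpr hn)]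
  rw [hp0, Polynomial.coeff_zero] at hc
  exact hc.symm

/-- Truncated exponential `∑_{k<l} (t^k/k!) N^k v`. -/
noncomputable def Efn {V : Type*} [AddCommGroup V] [Module ℂ V] (N : Module.End ℂ V) (t : ℂ) (l : ℕ)
    (v : V) : V :=
  ∑ k ∈ Finset.range l, (t ^ k / (k.factorial : ℂ)) • (N ^ k) v

/-- if φ is an invertible locally finite automorphism of a nonassociative
algebra (with bilinear multiplication `mul`), and φ = σ ∘ exp(-2πi N) is its
Jordan–Chevalley-type decomposition into a commuting semisimple σ and locally nilpotent N,
then σ is an algebra automorphism and N is a derivation. -/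
theorem stmt1 {V : Type*} [AddCommGroup V] [Module ℂ V]
    (mul : V →ₗ[ℂ] V →ₗ[ℂ] V)
    (φ σ N : Module.End ℂ V)
    (hbij : Function.Bijective (⇑φ)) (hlf : LocFin φ)
    (haut : ∀ a b : V, φ (mul a b) = mul (φ a) (φ b))
    (hσ : IsDiag σ) (hN : LocNilp N) (hcomm : σ * N = N * σ)
    (hdec : ∀ (a : V) (l : ℕ), (N ^ l) a = 0 →
      φ a = σ (∑ k ∈ Finset.range l,
        ((-(2 * (Real.pi : ℂ) * Complex.I)) ^ k / (k.factorial : ℂ)) • (N ^ k) a)) :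
    (∀ a b : V, σ (mul a b) = mul (σ a) (σ b)) ∧
    (∀ a b : V, N (mul a b) = mul (N a) b + mul a (N b)) := by
  set c : ℂ := -(2 * (Real.pi : ℂ) * Complex.I) with hcdef
  have hcne : c ≠ 0 := by
    rw [hcdef, neg_ne_zero]
    exact mul_ne_zero (mul_ne_zero two_ne_zero
      (Complex.ofReal_ne_zero.mpr Real.pi_ne_zero)) Complex.I_ne_zero
  have hC : Commute σ N := hcomm
  -- σ commutes with powers of N
  have hcommk : ∀ (k : ℕ) (v : V), σ ((N ^ k) v) = (N ^ k) (σ v) := by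
    intro k v
    rw [← Module.End.mul_apply, (hC.pow_right k), Module.End.mul_apply]
  have hEig : ∀ {v : V} {μ : ℂ}, σ v = μ • v → ∀ k : ℕ, σ ((N ^ k) v) = μ • (N ^ k) v := by
    intro v μ hv k
    rw [hcommk, hv, map_smul]
  have hNmono : ∀ {v : V} {l l' : ℕ}, l ≤ l' → (N ^ l) v = 0 → (N ^ l') v = 0 := by
    intro v l l' hll hv
    have : N ^ l' = N ^ (l' - l) * N ^ l := by rw [← pow_add, Nat.sub_add_cancel hll]
    rw [this, Module.End.mul_apply, hv, map_zero]
  have hNk : ∀ {v : V} {l : ℕ} (k : ℕ), (N ^ l) v = 0 → (N ^ l) ((N ^ k) v) = 0 := by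
    intro v l k hv
    rw [← Module.End.mul_apply, ← pow_add, add_comm, pow_add, Module.End.mul_apply, hv, map_zero]
  have hpowpow : ∀ (j k : ℕ) (v : V), (N ^ j) ((N ^ k) v) = (N ^ (j + k)) v := by
    intro j k v
    rw [← Module.End.mul_apply, ← pow_add]
  -- φ acts as μ • (truncated exp) on eigen-nilpotent vectors
  have hφE : ∀ {v : V} {μ : ℂ} {l : ℕ}, σ v = μ • v → (N ^ l) v = 0 →
      φ v = μ • Efn N c l v := by
    intro v μ l hv hnil
    rw [hdec v l hnil, map_sum, Efn, Finset.smul_sum]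
    refine Finset.sum_congr rfl fun k _ => ?_
    rw [map_smul, hEig hv k, smul_comm]
  have hEsig : ∀ {v : V} {μ : ℂ} (t : ℂ) (l : ℕ), σ v = μ • v →
      σ (Efn N t l v) = μ • Efn N t l v := by
    intro v μ t l hv
    rw [Efn, map_sum, Finset.smul_sum]
    refine Finset.sum_congr rfl fun k _ => ?_
    rw [map_smul, hEig hv k, smul_comm]
  have hEnil : ∀ {v : V} {l : ℕ} (t : ℂ), (N ^ l) v = 0 → (N ^ l) (Efn N t l v) = 0 := by
    intro v l t hnil
    rw [Efn, map_sum]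
    refine Finset.sum_eq_zero fun k _ => ?_
    rw [map_smul, hpowpow, add_comm, ← hpowpow, hnil, map_zero, smul_zero]
  have hE0 : ∀ {v : V} {l : ℕ}, 1 ≤ l → Efn N 0 l v = v := by
    intro v l hl
    rw [Efn]
    rw [Finset.sum_eq_single_of_mem 0 (Finset.mem_range.mpr hl)]
    · simp
    · intro k _ hk
      rw [zero_pow hk, zero_div, zero_smul]
  have hEadd : ∀ {v : V} {l : ℕ}, (N ^ l) v = 0 → ∀ s t : ℂ,
      Efn N s l (Efn N t l v) = Efn N (s + t) l v := by
    intro v l hnil s t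
    have hstep : Efn N s l (Efn N t l v) =
        ∑ j ∈ Finset.range l, ∑ k ∈ Finset.range l,
          ((s ^ j / (j.factorial : ℂ)) * (t ^ k / (k.factorial : ℂ))) • (N ^ (j + k)) v := by
      rw [Efn]
      refine Finset.sum_congr rfl fun j _ => ?_
      rw [Efn, map_sum, Finset.smul_sum]
      refine Finset.sum_congr rfl fun k _ => ?_
      rw [map_smul, hpowpow, smul_smul]
    have hF0 : ∀ j k : ℕ, l ≤ j + k →
        ((s ^ j / (j.factorial : ℂ)) * (t ^ k / (k.factorial : ℂ))) • (N ^ (j + k)) v = 0 := by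
      intro j k hjk
      rw [hNmono hjk hnil, smul_zero]
    have htrunc : ∀ j ∈ Finset.range l,
        (∑ k ∈ Finset.range l,
          ((s ^ j / (j.factorial : ℂ)) * (t ^ k / (k.factorial : ℂ))) • (N ^ (j + k)) v) =
        ∑ k ∈ Finset.range (l - j),
          ((s ^ j / (j.factorial : ℂ)) * (t ^ k / (k.factorial : ℂ))) • (N ^ (j + k)) v := by
      intro j hj
      refine (Finset.sum_subset (Finset.range_subset_range.mpr (Nat.sub_le l j)) ?_).symm
      intro k _ hk
      exact hF0 j k (by simp only [Finset.mem_range, not_lt] at hk ⊢; omega)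
    rw [hstep, Finset.sum_congr rfl htrunc, ← Finset.sum_range_diag_flip l
      (fun j k => ((s ^ j / (j.factorial : ℂ)) * (t ^ k / (k.factorial : ℂ))) • (N ^ (j + k)) v)]
    rw [Efn]
    refine Finset.sum_congr rfl fun n hn => ?_
    have hinner : ∀ k ∈ Finset.range (n + 1),
        ((s ^ k / (k.factorial : ℂ)) * (t ^ (n - k) / ((n - k).factorial : ℂ))) •
          (N ^ (k + (n - k))) v
        = (s ^ k * t ^ (n - k) * (n.choose k : ℂ) / (n.factorial : ℂ)) • (N ^ n) v := by
      intro k hk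
      have hkn : k ≤ n := by simpa [Nat.lt_succ_iff] using hk
      have hfact : (n.choose k : ℂ) * (k.factorial : ℂ) * ((n - k).factorial : ℂ) =
          (n.factorial : ℂ) := by
        exact_mod_cast congrArg (Nat.cast : ℕ → ℂ)
          (Nat.choose_mul_factorial_mul_factorial hkn)
      rw [Nat.add_sub_cancel' hkn]
      congr 1
      have h1 : (k.factorial : ℂ) ≠ 0 := Nat.cast_ne_zero.mpr k.factorial_ne_zero
      have h2 : ((n - k).factorial : ℂ) ≠ 0 := Nat.cast_ne_zero.mpr (n - k).factorial_ne_zero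
      have h3 : (n.factorial : ℂ) ≠ 0 := Nat.cast_ne_zero.mpr n.factorial_ne_zero
      field_simp
      linear_combination (-(s ^ k * t ^ (n - k))) * hfact
    rw [Finset.sum_congr rfl hinner, ← Finset.sum_smul, add_pow]
    congr 1
    rw [Finset.sum_div]
  have hφpow : ∀ {v : V} {μ : ℂ} {l : ℕ}, 1 ≤ l → σ v = μ • v → (N ^ l) v = 0 →
      ∀ m : ℕ, (φ ^ m) v = μ ^ m • Efn N ((m : ℂ) * c) l v := by
    intro v μ l hl hv hnil m
    induction m with
    | zero => simp [hE0 hl]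
    | succ m ih =>
      have hw1 : σ (Efn N ((m : ℂ) * c) l v) = μ • Efn N ((m : ℂ) * c) l v := hEsig _ _ hv
      have hw2 : (N ^ l) (Efn N ((m : ℂ) * c) l v) = 0 := hEnil _ hnil
      have harg : (((m + 1 : ℕ)) : ℂ) * c = c + (m : ℂ) * c := by push_cast; ring
      rw [pow_succ', Module.End.mul_apply, ih, map_smul, hφE hw1 hw2, hEadd hnil,
        smul_smul, ← pow_succ, harg]
  have hμne : ∀ {v : V} {μ : ℂ}, σ v = μ • v → v ≠ 0 → μ ≠ 0 := by
    intro v μ hv hv0 hμ0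
    rw [hμ0, zero_smul] at hv
    obtain ⟨l, hl1, hl⟩ := hN v
    have hφv : φ v = 0 := by
      rw [hdec v l hl, map_sum]
      refine Finset.sum_eq_zero fun k _ => ?_
      rw [map_smul, hcommk, hv, map_zero, smul_zero]
    exact hv0 (hbij.injective (by rw [hφv, map_zero]))
  -- eigenvectors of σ are generalized eigenvectors of φ
  have hgen : ∀ {v : V} {μ : ℂ} {l : ℕ}, 1 ≤ l → σ v = μ • v → (N ^ l) v = 0 →
      ((φ - μ • 1) ^ l) v = 0 := by
    intro v μ l hl hv hnil
    have key : ∀ n : ℕ, ((φ - μ • 1) ^ n) v ∈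
        Submodule.span ℂ {w : V | ∃ k, n ≤ k ∧ w = (N ^ k) v} := by
      intro n
      induction n with
      | zero => exact Submodule.subset_span ⟨0, le_refl 0, by simp⟩
      | succ n ih =>
        rw [pow_succ', Module.End.mul_apply]
        refine Submodule.span_induction
          (p := fun x _ => (φ - μ • 1) x ∈
            Submodule.span ℂ {w : V | ∃ k, n + 1 ≤ k ∧ w = (N ^ k) v}) ?_ ?_ ?_ ?_ ih
        · rintro x ⟨k, hk, rfl⟩
          have heig : σ ((N ^ k) v) = μ • (N ^ k) v := hEig hv k
          have hnk : (N ^ l) ((N ^ k) v) = 0 := hNk k hnil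
          have hE : Efn N c l ((N ^ k) v) = (N ^ k) v +
              ∑ j ∈ Finset.Ico 1 l, (c ^ j / (j.factorial : ℂ)) • (N ^ (j + k)) v := by
            rw [Efn, Finset.range_eq_Ico, Finset.sum_eq_sum_Ico_succ_bot hl]
            congr 1
            · simp
            · refine Finset.sum_congr rfl fun j _ => ?_
              rw [hpowpow]
          have h2 : (φ - μ • 1) ((N ^ k) v) =
              μ • ∑ j ∈ Finset.Ico 1 l, (c ^ j / (j.factorial : ℂ)) • (N ^ (j + k)) v := by
            rw [LinearMap.sub_apply, hφE heig hnk, hE, LinearMap.smul_apply,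
              Module.End.one_apply, smul_add]
            abel
          rw [h2]
          refine Submodule.smul_mem _ _ (Submodule.sum_mem _ fun j hj => ?_)
          have hj1 : 1 ≤ j := (Finset.mem_Ico.mp hj).1
          exact Submodule.smul_mem _ _
            (Submodule.subset_span ⟨j + k, by omega, rfl⟩)
        · simp
        · intro x y _ _ hx hy
          rw [map_add]
          exact Submodule.add_mem _ hx hy
        · intro r x _ hx
          rw [map_smul]
          exact Submodule.smul_mem _ _ hx
    have hsub : ((φ - μ • 1) ^ l) v ∈ (⊥ : Submodule ℂ V) := by
      refine Submodule.span_le.mpr ?_ (key l)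
      rintro w ⟨k, hk, rfl⟩
      simpa using hNmono hk hnil
    simpa using hsub
  have hmax : ∀ {v : V} {μ : ℂ}, σ v = μ • v → v ∈ φ.maxGenEigenspace μ := by
    intro v μ hv
    obtain ⟨l, hl1, hl⟩ := hN v
    exact (Module.End.mem_maxGenEigenspace φ μ v).mpr ⟨l, hgen hl1 hv hl⟩
  have hprodmax : ∀ {a b : V} {μ ν : ℂ}, σ a = μ • a → σ b = ν • b →
      mul a b ∈ φ.maxGenEigenspace (μ * ν) := by
    intro a b μ ν ha hb
    obtain ⟨p, hp1, hpN⟩ := hN a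
    obtain ⟨q, hq1, hqN⟩ := hN b
    set A : Module.End ℂ V := φ - μ • 1 with hA
    set B : Module.End ℂ V := φ - ν • 1 with hB
    set D : Module.End ℂ V := φ - (μ * ν) • 1 with hD
    have hAp : (A ^ p) a = 0 := hgen hp1 ha hpN
    have hBq : (B ^ q) b = 0 := hgen hq1 hb hqN
    have hφA : ∀ (j : ℕ) (x : V), φ ((A ^ j) x) = (A ^ (j + 1)) x + μ • (A ^ j) x := by
      intro j x
      rw [pow_succ', Module.End.mul_apply, hA, LinearMap.sub_apply, LinearMap.smul_apply,
        Module.End.one_apply]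
      abel
    have hφB : ∀ (k : ℕ) (x : V), φ ((B ^ k) x) = (B ^ (k + 1)) x + ν • (B ^ k) x := by
      intro k x
      rw [pow_succ', Module.End.mul_apply, hB, LinearMap.sub_apply, LinearMap.smul_apply,
        Module.End.one_apply]
      abel
    have hDmul : ∀ j k : ℕ, D (mul ((A ^ j) a) ((B ^ k) b)) =
        mul ((A ^ (j + 1)) a) ((B ^ (k + 1)) b) + ν • mul ((A ^ (j + 1)) a) ((B ^ k) b)
          + μ • mul ((A ^ j) a) ((B ^ (k + 1)) b) := by
      intro j k
      rw [hD, LinearMap.sub_apply, LinearMap.smul_apply, Module.End.one_apply, haut,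
        hφA j a, hφB k b]
      simp only [map_add, map_smul, LinearMap.add_apply, LinearMap.smul_apply, smul_add,
        smul_smul]
      rw [mul_comm ν μ]
      abel
    have key : ∀ n : ℕ, (D ^ n) (mul a b) ∈
        Submodule.span ℂ {w : V | ∃ j k, n ≤ j + k ∧ w = mul ((A ^ j) a) ((B ^ k) b)} := by
      intro n
      induction n with
      | zero => exact Submodule.subset_span ⟨0, 0, by omega, by simp⟩
      | succ n ih =>
        rw [pow_succ', Module.End.mul_apply]
        refine Submodule.span_induction
          (p := fun x _ => D x ∈ Submodule.span ℂ
            {w : V | ∃ j k, n + 1 ≤ j + k ∧ w = mul ((A ^ j) a) ((B ^ k) b)}) ?_ ?_ ?_ ?_ ih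
        · rintro x ⟨j, k, hjk, rfl⟩
          rw [hDmul j k]
          refine Submodule.add_mem _ (Submodule.add_mem _ ?_ ?_) ?_
          · exact Submodule.subset_span ⟨j + 1, k + 1, by omega, rfl⟩
          · exact Submodule.smul_mem _ _ (Submodule.subset_span ⟨j + 1, k, by omega, rfl⟩)
          · exact Submodule.smul_mem _ _ (Submodule.subset_span ⟨j, k + 1, by omega, rfl⟩)
        · simp
        · intro x y _ _ hx hy
          rw [map_add]
          exact Submodule.add_mem _ hx hy
        · intro r x _ hx
          rw [map_smul]
          exact Submodule.smul_mem _ _ hx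
    have hzero : (D ^ (p + q)) (mul a b) = 0 := by
      have hsub : (D ^ (p + q)) (mul a b) ∈ (⊥ : Submodule ℂ V) := by
        refine Submodule.span_le.mpr ?_ (key (p + q))
        rintro w ⟨j, k, hjk, rfl⟩
        have : j ≥ p ∨ k ≥ q := by omega
        rcases this with hj | hk
        · have : (A ^ j) a = 0 := by
            rw [show j = (j - p) + p by omega, pow_add, Module.End.mul_apply, hAp, map_zero]
          simp [this]
        · have : (B ^ k) b = 0 := by
            rw [show k = (k - q) + q by omega, pow_add, Module.End.mul_apply, hBq, map_zero]
          simp [this]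
      simpa using hsub
    exact (Module.End.mem_maxGenEigenspace φ (μ * ν) (mul a b)).mpr ⟨p + q, hzero⟩
  have hσeig : ∀ {a b : V} {μ ν : ℂ}, σ a = μ • a → σ b = ν • b →
      σ (mul a b) = (μ * ν) • mul a b := by
    intro a b μ ν ha hb
    classical
    have hmem : mul a b ∈ ⨆ lam : ℂ, σ.eigenspace lam := by
      refine Submodule.span_le.mpr ?_ (hσ (mul a b))
      rintro v ⟨lam, hv⟩
      exact le_iSup (fun lam : ℂ => σ.eigenspace lam) lam
        (Module.End.mem_eigenspace_iff.mpr hv)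
    rw [Submodule.mem_iSup_iff_exists_finsupp] at hmem
    obtain ⟨f, hf, hsum⟩ := hmem
    have hfeig : ∀ lam : ℂ, σ (f lam) = lam • f lam := fun lam =>
      Module.End.mem_eigenspace_iff.mp (hf lam)
    have hd : mul a b - f (μ * ν) ∈ φ.maxGenEigenspace (μ * ν) :=
      Submodule.sub_mem _ (hprodmax ha hb) (hmax (hfeig (μ * ν)))
    have hd2 : mul a b - f (μ * ν) ∈
        ⨆ (lam : ℂ) (_ : lam ≠ μ * ν), φ.maxGenEigenspace lam := by
      have heq : mul a b - f (μ * ν) = ∑ lam ∈ f.support.erase (μ * ν), f lam := by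
        rw [← hsum, Finsupp.sum]
        by_cases hm : (μ * ν) ∈ f.support
        · rw [← Finset.add_sum_erase _ _ hm]
          abel
        · rw [Finset.erase_eq_of_notMem hm, Finsupp.notMem_support_iff.mp hm, sub_zero]
      rw [heq]
      refine Submodule.sum_mem _ fun lam hlam => ?_
      have hne : lam ≠ μ * ν := (Finset.mem_erase.mp hlam).1
      exact le_iSup₂ (f := fun (lam : ℂ) (_ : lam ≠ μ * ν) => φ.maxGenEigenspace lam) lam hne
        (hmax (hfeig lam))
    have h0 : mul a b - f (μ * ν) = 0 := by
      have hdisj := Module.End.independent_maxGenEigenspace φ (μ * ν)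
      exact Submodule.mem_bot ℂ |>.mp (hdisj.le_bot (Submodule.mem_inf.mpr ⟨hd, hd2⟩))
    have heq2 : mul a b = f (μ * ν) := by rwa [sub_eq_zero] at h0
    rw [heq2, hfeig (μ * ν)]
  have hσaut : ∀ a b : V, σ (mul a b) = mul (σ a) (σ b) := by
    have key : ∀ a : V, (∃ μ : ℂ, σ a = μ • a) → ∀ b : V, σ (mul a b) = mul (σ a) (σ b) := by
      rintro a ⟨μ, hμ⟩ b
      refine Submodule.span_induction (p := fun b _ => σ (mul a b) = mul (σ a) (σ b))
        ?_ ?_ ?_ ?_ (hσ b)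
      · rintro y ⟨ν, hν⟩
        rw [hσeig hμ hν, hμ, hν]
        simp only [map_smul, LinearMap.smul_apply, smul_smul]
        rw [mul_comm]
      · simp
      · intro y z _ _ hy hz
        simp only [map_add, LinearMap.add_apply, hy, hz]
      · intro r y _ hy
        simp only [map_smul, LinearMap.smul_apply, hy]
    intro a b
    refine Submodule.span_induction (p := fun a _ => σ (mul a b) = mul (σ a) (σ b))
      ?_ ?_ ?_ ?_ (hσ a)
    · intro y hy
      exact key y hy b
    · simp
    · intro y z _ _ hy hz
      simp only [map_add, LinearMap.add_apply, hy, hz]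
    · intro r y _ hy
      simp only [map_smul, LinearMap.smul_apply, hy]
  have hder_eig : ∀ (a b : V) (μ ν : ℂ), σ a = μ • a → σ b = ν • b → μ ≠ 0 → ν ≠ 0 →
      N (mul a b) = mul (N a) b + mul a (N b) := by
    intro a b μ ν ha hb hμ hν
    classical
    obtain ⟨la, hla1, hlaN⟩ := hN a
    obtain ⟨lb, hlb1, hlbN⟩ := hN b
    obtain ⟨lc', hlc1, hlcN⟩ := hN (mul a b)
    set L : ℕ := max (max la lb) lc' + 1 with hLdef
    have hL2 : 2 ≤ L := by omega
    have hLa : (N ^ L) a = 0 := hNmono (by omega) hlaN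
    have hLb : (N ^ L) b = 0 := hNmono (by omega) hlbN
    have hLab : (N ^ L) (mul a b) = 0 := hNmono (by omega) hlcN
    have hab : σ (mul a b) = (μ * ν) • mul a b := hσeig ha hb
    have hmulpow : ∀ (m : ℕ) (x y : V), (φ ^ m) (mul x y) = mul ((φ ^ m) x) ((φ ^ m) y) := by
      intro m
      induction m with
      | zero => simp
      | succ m ih =>
        intro x y
        rw [pow_succ, Module.End.mul_apply, haut, ih (φ x) (φ y)]
        simp only [← Module.End.mul_apply, ← pow_succ]
    have key : ∀ m : ℕ, Efn N ((m : ℂ) * c) L (mul a b) =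
        mul (Efn N ((m : ℂ) * c) L a) (Efn N ((m : ℂ) * c) L b) := by
      intro m
      have h1 := hφpow (μ := μ * ν) (l := L) (by omega) hab hLab m
      have h2 := hφpow (μ := μ) (l := L) (by omega) ha hLa m
      have h3 := hφpow (μ := ν) (l := L) (by omega) hb hLb m
      have h4 := hmulpow m a b
      rw [h1, h2, h3] at h4
      simp only [map_smul, LinearMap.smul_apply, smul_smul] at h4
      rw [← mul_pow, mul_comm ν μ] at h4
      exact smul_right_injective V (pow_ne_zero m (mul_ne_zero hμ hν)) h4
    set y : ℕ → ℕ → V := fun j k =>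
      ((c ^ j / (j.factorial : ℂ)) * (c ^ k / (k.factorial : ℂ))) •
        mul ((N ^ j) a) ((N ^ k) b) with hydef
    set x : ℕ → V := fun n =>
      (if n < L then (c ^ n / (n.factorial : ℂ)) • (N ^ n) (mul a b) else 0)
      - ∑ j ∈ Finset.range L, ∑ k ∈ Finset.range L, (if j + k = n then y j k else 0)
      with hxdef
    have hvan : ∀ m : ℕ, ∑ n ∈ Finset.range (2 * L), ((m : ℂ) ^ n) • x n = 0 := by
      intro m
      have hsplit : ∑ n ∈ Finset.range (2 * L), ((m : ℂ) ^ n) • x n =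
          (∑ n ∈ Finset.range (2 * L), ((m : ℂ) ^ n) •
            (if n < L then (c ^ n / (n.factorial : ℂ)) • (N ^ n) (mul a b) else 0))
          - ∑ n ∈ Finset.range (2 * L), ((m : ℂ) ^ n) •
            (∑ j ∈ Finset.range L, ∑ k ∈ Finset.range L, (if j + k = n then y j k else 0)) := by
        rw [← Finset.sum_sub_distrib]
        refine Finset.sum_congr rfl fun n _ => ?_
        simp only [hxdef, smul_sub]
      have hfirst : (∑ n ∈ Finset.range (2 * L), ((m : ℂ) ^ n) •
          (if n < L then (c ^ n / (n.factorial : ℂ)) • (N ^ n) (mul a b) else 0)) =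
          Efn N ((m : ℂ) * c) L (mul a b) := by
        rw [Efn]
        refine (Finset.sum_subset (Finset.range_subset_range.mpr
          (show L ≤ 2 * L by omega)) ?_).symm.trans ?_
        · intro n _ hn
          rw [if_neg (by simpa using hn), smul_zero]
        · refine Finset.sum_congr rfl fun n hn => ?_
          rw [if_pos (Finset.mem_range.mp hn), smul_smul]
          congr 1
          rw [mul_pow]
          ring
      have hrhs : mul (Efn N ((m : ℂ) * c) L a) (Efn N ((m : ℂ) * c) L b) =
          ∑ j ∈ Finset.range L, ∑ k ∈ Finset.range L, ((m : ℂ) ^ (j + k)) • y j k := by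
        rw [Efn, Efn]
        have h1 : mul (∑ j ∈ Finset.range L,
            (((m : ℂ) * c) ^ j / (j.factorial : ℂ)) • (N ^ j) a) =
            ∑ j ∈ Finset.range L, mul ((((m : ℂ) * c) ^ j / (j.factorial : ℂ)) • (N ^ j) a) :=
          map_sum mul _ (Finset.range L)
        rw [h1, LinearMap.sum_apply]
        refine Finset.sum_congr rfl fun j _ => ?_
        rw [map_sum]
        refine Finset.sum_congr rfl fun k _ => ?_
        simp only [map_smul, LinearMap.smul_apply, smul_smul, hydef]
        congr 1
        rw [mul_pow, mul_pow, pow_add]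
        ring
      have hsecond : (∑ n ∈ Finset.range (2 * L), ((m : ℂ) ^ n) •
          (∑ j ∈ Finset.range L, ∑ k ∈ Finset.range L, (if j + k = n then y j k else 0))) =
          ∑ j ∈ Finset.range L, ∑ k ∈ Finset.range L, ((m : ℂ) ^ (j + k)) • y j k := by
        have hstep1 : (∑ n ∈ Finset.range (2 * L), ((m : ℂ) ^ n) •
            (∑ j ∈ Finset.range L, ∑ k ∈ Finset.range L, (if j + k = n then y j k else 0))) =
            ∑ n ∈ Finset.range (2 * L), ∑ j ∈ Finset.range L, ∑ k ∈ Finset.range L,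
              (if j + k = n then ((m : ℂ) ^ n) • y j k else 0) := by
          refine Finset.sum_congr rfl fun n _ => ?_
          rw [Finset.smul_sum]
          refine Finset.sum_congr rfl fun j _ => ?_
          rw [Finset.smul_sum]
          refine Finset.sum_congr rfl fun k _ => ?_
          rw [smul_ite, smul_zero]
        rw [hstep1, Finset.sum_comm]
        refine Finset.sum_congr rfl fun j hj => ?_
        rw [Finset.sum_comm]
        refine Finset.sum_congr rfl fun k hk => ?_
        rw [Finset.sum_ite_eq (Finset.range (2 * L)) (j + k) (fun n => ((m : ℂ) ^ n) • y j k)]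
        rw [if_pos (Finset.mem_range.mpr (by
          have := Finset.mem_range.mp hj
          have := Finset.mem_range.mp hk
          omega))]
      rw [hsplit, hfirst, hsecond, ← hrhs, key m, sub_self]
    have hx1 : x 1 = 0 := aux_vandermonde x hvan 1 (by omega)
    have hxx : x 1 = c • N (mul a b) - (c • mul a (N b) + c • mul (N a) b) := by
      simp only [hxdef]
      congr 1
      · rw [if_pos (by omega : 1 < L)]
        norm_num [Nat.factorial]
      · rw [← Finset.sum_product']
        rw [Finset.sum_ite, Finset.sum_const_zero, add_zero]
        have hfil : (Finset.range L ×ˢ Finset.range L).filter (fun p => p.1 + p.2 = 1)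
            = {((0 : ℕ), (1 : ℕ)), (1, 0)} := by
          ext ⟨j, k⟩
          simp only [Finset.mem_filter, Finset.mem_product, Finset.mem_range,
            Finset.mem_insert, Finset.mem_singleton, Prod.mk.injEq]
          omega
        rw [hfil, Finset.sum_insert (by decide), Finset.sum_singleton]
        simp only [hydef]
        norm_num [Nat.factorial]
    rw [hxx] at hx1
    have h5 : c • N (mul a b) = c • mul a (N b) + c • mul (N a) b := by
      rwa [sub_eq_zero] at hx1
    refine smul_right_injective V hcne ?_
    show c • N (mul a b) = c • (mul (N a) b + mul a (N b))
    rw [h5, smul_add, add_comm]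
  have hder : ∀ a b : V, N (mul a b) = mul (N a) b + mul a (N b) := by
    have key : ∀ a : V, (∃ μ : ℂ, σ a = μ • a) → ∀ b : V,
        N (mul a b) = mul (N a) b + mul a (N b) := by
      rintro a ⟨μ, hμ⟩ b
      refine Submodule.span_induction
        (p := fun b _ => N (mul a b) = mul (N a) b + mul a (N b)) ?_ ?_ ?_ ?_ (hσ b)
      · rintro y ⟨ν, hν⟩
        by_cases ha0 : a = 0
        · simp [ha0]
        by_cases hy0 : y = 0
        · simp [hy0]
        exact hder_eig a y μ ν hμ hν (hμne hμ ha0) (hμne hν hy0)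
      · simp
      · intro y z _ _ hy hz
        simp only [map_add, LinearMap.add_apply, hy, hz]
        abel
      · intro r y _ hy
        simp only [map_smul, LinearMap.smul_apply, hy, smul_add]
    intro a b
    refine Submodule.span_induction
      (p := fun a _ => N (mul a b) = mul (N a) b + mul a (N b)) ?_ ?_ ?_ ?_ (hσ a)
    · intro y hy
      exact key y hy b
    · simp
    · intro y z _ _ hy hz
      simp only [map_add, LinearMap.add_apply, hy, hz]
      abel
    · intro r y _ hy
      simp only [map_smul, LinearMap.smul_apply, hy, smul_add]
  exact ⟨hσaut, hder⟩
end

section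
/- Let V be a nonassociative algebra, φ an automorphism of V, λ, μ ∈ ℂ, l ≥ 1, and a, b ∈ V with (φ - λ)^l a = 0 and (φ - μ)^l b = 0. Then (φ - λμ)^m (ab) = 0 for all m ≥ 2l - 1. In particular, the product of generalized eigenvectors of an automorphism with eigenvalues λ and μ is a generalized eigenvector with eigenvalue λμ. -/
open TensorProduct

/-- if φ is an automorphism of a nonassociative algebra and
(φ - λ)^l a = 0, (φ - μ)^l b = 0, then (φ - λμ)^m (ab) = 0 for all m ≥ 2l - 1. -/
theorem stmt2 {V : Type*} [AddCommGroup V] [Module ℂ V]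
    (mul : V →ₗ[ℂ] V →ₗ[ℂ] V)
    (φ : Module.End ℂ V) (hbij : Function.Bijective (⇑φ))
    (haut : ∀ a b : V, φ (mul a b) = mul (φ a) (φ b))
    (lam mu : ℂ) (l : ℕ) (hl : 1 ≤ l) (a b : V)
    (ha : ((φ - lam • (1 : Module.End ℂ V)) ^ l) a = 0)
    (hb : ((φ - mu • (1 : Module.End ℂ V)) ^ l) b = 0) :
    ∀ m : ℕ, 2 * l - 1 ≤ m → ((φ - (lam * mu) • (1 : Module.End ℂ V)) ^ m) (mul a b) = 0 := by
  intro m hm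
  set A : Module.End ℂ V := φ - lam • (1 : Module.End ℂ V) with hA
  set B : Module.End ℂ V := φ - mu • (1 : Module.End ℂ V) with hB
  set P : Module.End ℂ (V ⊗[ℂ] V) := TensorProduct.map A φ with hP
  set Q : Module.End ℂ (V ⊗[ℂ] V) := lam • TensorProduct.map 1 B with hQ
  set L : V ⊗[ℂ] V →ₗ[ℂ] V := TensorProduct.lift mul with hLdef
  -- commutation of the product map with P + Q
  have hkey : ∀ z : V ⊗[ℂ] V, L ((P + Q) z) = (φ - (lam * mu) • (1 : Module.End ℂ V)) (L z) := by
    have : L ∘ₗ (P + Q) = (φ - (lam * mu) • (1 : Module.End ℂ V)) ∘ₗ L := by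
      apply TensorProduct.ext'
      intro x y
      simp [hP, hQ, hA, hB, hLdef, haut, smul_smul, mul_comm]
      module
    intro z
    exact LinearMap.congr_fun this z
  have hiter : ∀ n : ℕ, L (((P + Q) ^ n) (a ⊗ₜ[ℂ] b)) =
      ((φ - (lam * mu) • (1 : Module.End ℂ V)) ^ n) (mul a b) := by
    intro n
    induction n with
    | zero => simp [hLdef]
    | succ n ih =>
      rw [pow_succ', pow_succ']
      rw [Module.End.mul_apply, hkey, ih, Module.End.mul_apply]
  have hPQ : Commute P Q := by
    have hφB : φ * B = B * φ := by
      simp [hB, mul_sub, sub_mul, mul_smul_comm, smul_mul_assoc]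
    show P * Q = Q * P
    rw [hP, hQ, mul_smul_comm, smul_mul_assoc, ← TensorProduct.map_mul, ← TensorProduct.map_mul,
      mul_one, one_mul, hφB]
  -- each summand kills a ⊗ b
  have hterm : ∀ k, k ≤ m → (P ^ k * Q ^ (m - k)) (a ⊗ₜ[ℂ] b) = 0 := by
    intro k hk
    have hQpow : Q ^ (m - k) = (lam ^ (m - k)) • TensorProduct.map 1 (B ^ (m - k)) := by
      rw [hQ, smul_pow, TensorProduct.map_pow, one_pow]
    have hPpow : P ^ k = TensorProduct.map (A ^ k) (φ ^ k) := by
      rw [hP, TensorProduct.map_pow]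
    rw [Module.End.mul_apply, hQpow, hPpow]
    simp only [LinearMap.smul_apply, TensorProduct.map_tmul, LinearMap.map_smul,
      Module.End.one_apply]
    rcases le_or_gt l k with h | h
    · have : (A ^ k) a = 0 := by
        rw [← Nat.sub_add_cancel h, pow_add, Module.End.mul_apply, ha, map_zero]
      rw [this, TensorProduct.zero_tmul, smul_zero]
    · have hmk : l ≤ m - k := by omega
      have : (B ^ (m - k)) b = 0 := by
        rw [← Nat.sub_add_cancel hmk, pow_add, Module.End.mul_apply, hb, map_zero]
      rw [this, map_zero, TensorProduct.tmul_zero, smul_zero]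
  rw [← hiter, hPQ.add_pow]
  simp only [LinearMap.coe_sum, Finset.sum_apply]
  have hz : ∑ k ∈ Finset.range (m + 1), (P ^ k * Q ^ (m - k) * (m.choose k : Module.End ℂ (V ⊗[ℂ] V))) (a ⊗ₜ[ℂ] b) = 0 := by
    apply Finset.sum_eq_zero
    intro k hk
    have hk' : k ≤ m := by
      have := Finset.mem_range.mp hk; omega
    have hc : ((m.choose k : Module.End ℂ (V ⊗[ℂ] V))) (a ⊗ₜ[ℂ] b) = (m.choose k : ℕ) • (a ⊗ₜ[ℂ] b) := by
      simp [Module.End.natCast_apply]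
    rw [mul_assoc, Module.End.mul_apply, Module.End.mul_apply, hc, map_nsmul, map_nsmul]
    have ht := hterm k hk'
    rw [Module.End.mul_apply] at ht
    rw [ht, smul_zero]
  rw [hz, map_zero]
end

section
/- Let V be a nonassociative algebra and φ an invertible linear operator on V such that φ^k is an algebra automorphism for every integer k, and suppose N is a linear operator on V such that for each pair a, b ∈ V the expression exp(2πi x N)(ab) - (exp(2πi x N) a)(exp(2πi x N) b) is a polynomial function of x (e.g., N locally nilpotent). If this polynomial vanishes at every integer x = k, then N is a derivation of V. -/
lemma key_aux {V : Type*} [AddCommGroup V] [Module ℂ V] (n : ℕ) (c : ℕ → V)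
    (h : ∀ m : ℕ, ∑ k ∈ Finset.range n, (m : ℂ) ^ k • c k = 0) :
    ∀ k, k < n → c k = 0 := by
  intro k hk
  rw [← Module.forall_dual_apply_eq_zero_iff ℂ]
  intro f
  set p : Polynomial ℂ := ∑ j ∈ Finset.range n, Polynomial.monomial j (f (c j)) with hp
  have hroot : ∀ m : ℕ, p.IsRoot (m : ℂ) := by
    intro m
    have h2 := congrArg f (h m)
    simp only [map_sum, map_smul, smul_eq_mul, map_zero] at h2
    simp only [Polynomial.IsRoot, hp, Polynomial.eval_finset_sum, Polynomial.eval_monomial]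
    rw [Finset.sum_congr rfl (fun j _ => mul_comm (f (c j)) ((m : ℂ) ^ j))]
    exact h2
  have hp0 : p = 0 := by
    apply p.eq_zero_of_infinite_isRoot
    exact (Set.infinite_range_of_injective (f := (Nat.cast : ℕ → ℂ))
      Nat.cast_injective).mono (by rintro x ⟨m, rfl⟩; exact hroot m)
  have : f (c k) = p.coeff k := by
    rw [hp, Polynomial.finset_sum_coeff]
    rw [Finset.sum_congr rfl (fun j _ => Polynomial.coeff_monomial)]
    rw [Finset.sum_ite_eq' (Finset.range n) k (fun j => f (c j))]
    simp [hk]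
  rw [this, hp0]; simp

/-- let φ be an invertible operator on a nonassociative algebra such that every
power φ^k is an algebra automorphism, and let N be an operator (here locally nilpotent, so
that E x = exp(2πi x N) is defined pointwise by the finite exponential series) such that for
each pair a, b the expression E x (ab) - (E x a)(E x b) is a polynomial function of x.
If this polynomial vanishes at every integer x = k, then N is a derivation. -/
theorem stmt3 {V : Type*} [AddCommGroup V] [Module ℂ V]
    (mul : V →ₗ[ℂ] V →ₗ[ℂ] V)
    (φ N : Module.End ℂ V) (hbij : Function.Bijective (⇑φ))
    (hφaut : ∀ (k : ℕ) (a b : V), (φ ^ k) (mul a b) = mul ((φ ^ k) a) ((φ ^ k) b))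
    (hN : LocNilp N)
    (E : ℂ → V → V)
    (hE : ∀ (x : ℂ) (a : V) (l : ℕ), (N ^ l) a = 0 →
      E x a = ∑ k ∈ Finset.range l,
        ((2 * (Real.pi : ℂ) * Complex.I * x) ^ k / (k.factorial : ℂ)) • (N ^ k) a)
    (hpoly : ∀ a b : V, ∃ (n : ℕ) (c : ℕ → V), ∀ x : ℂ,
      E x (mul a b) - mul (E x a) (E x b) = ∑ k ∈ Finset.range n, x ^ k • c k)
    (hvanish : ∀ (a b : V) (k : ℤ), E (k : ℂ) (mul a b) = mul (E (k : ℂ) a) (E (k : ℂ) b)) :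
    ∀ a b : V, N (mul a b) = mul (N a) b + mul a (N b) := by
  intro a b
  set t : ℂ := 2 * (Real.pi : ℂ) * Complex.I with ht
  have htne : t ≠ 0 := by
    simp [ht, Complex.I_ne_zero, Complex.ofReal_ne_zero, Real.pi_ne_zero]
  -- everywhere-vanishing of the defect polynomial
  obtain ⟨n, c, hc⟩ := hpoly a b
  have hc0 : ∀ k, k < n → c k = 0 := by
    apply key_aux
    intro m
    rw [← hc (m : ℂ)]
    have := hvanish a b (m : ℤ)
    push_cast at this
    rw [this, sub_self]
  have hEmul : ∀ x : ℂ, E x (mul a b) = mul (E x a) (E x b) := by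
    intro x
    have := hc x
    rw [Finset.sum_congr rfl (fun k hk => by rw [hc0 k (Finset.mem_range.mp hk), smul_zero]),
      Finset.sum_const_zero] at this
    exact sub_eq_zero.mp this
  -- choose a common nilpotency index l ≥ 2
  obtain ⟨la, -, hla⟩ := hN a
  obtain ⟨lb, -, hlb⟩ := hN b
  obtain ⟨lc, -, hlc⟩ := hN (mul a b)
  have hstep : ∀ (v : V) (m l : ℕ), (N ^ m) v = 0 → m ≤ l → (N ^ l) v = 0 := by
    intro v m l h hml
    have : N ^ l = N ^ (l - m) * N ^ m := by rw [← pow_add]; congr 1; omega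
    rw [this, Module.End.mul_apply, h, map_zero]
  set l : ℕ := la + lb + lc + 2 with hl
  have hla' : (N ^ l) a = 0 := hstep a la l hla (by omega)
  have hlb' : (N ^ l) b = 0 := hstep b lb l hlb (by omega)
  have hlc' : (N ^ l) (mul a b) = 0 := hstep (mul a b) lc l hlc (by omega)
  have h1l : 1 ∈ Finset.range l := Finset.mem_range.mpr (by omega)
  have h0l : 0 ∈ Finset.range l := Finset.mem_range.mpr (by omega)
  -- reduce to dual functionals
  rw [← sub_eq_zero, ← Module.forall_dual_apply_eq_zero_iff ℂ]
  intro f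
  set p : Polynomial ℂ := ∑ k ∈ Finset.range l,
      Polynomial.monomial k (t ^ k / (k.factorial : ℂ) * f ((N ^ k) (mul a b))) with hpdef
  set q : Polynomial ℂ := ∑ i ∈ Finset.range l, ∑ j ∈ Finset.range l,
      Polynomial.monomial (i + j)
        (t ^ i / (i.factorial : ℂ) * (t ^ j / (j.factorial : ℂ)) *
          f (mul ((N ^ i) a) ((N ^ j) b))) with hqdef
  have hpq : p = q := by
    apply Polynomial.funext
    intro x
    have hL : p.eval x = f (E x (mul a b)) := by
      rw [hE x (mul a b) l hlc', map_sum]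
      simp only [hpdef, Polynomial.eval_finset_sum, Polynomial.eval_monomial, map_smul,
        smul_eq_mul, ← ht]
      refine Finset.sum_congr rfl fun k _ => ?_
      rw [mul_pow]
      ring
    have hR : q.eval x = f (mul (E x a) (E x b)) := by
      rw [hE x a l hla', hE x b l hlb']
      simp only [hqdef, Polynomial.eval_finset_sum, Polynomial.eval_monomial, map_sum,
        map_smul, LinearMap.sum_apply, LinearMap.smul_apply, Finset.smul_sum,
        smul_eq_mul, ← ht]
      rw [Finset.sum_comm]
      refine Finset.sum_congr rfl fun i _ => Finset.sum_congr rfl fun j _ => ?_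
      rw [mul_pow, mul_pow, pow_add]
      ring
    rw [hL, hR, hEmul x]
  have hcoeff := congrArg (fun r : Polynomial ℂ => r.coeff 1) hpq
  simp only [hpdef, hqdef, Polynomial.finset_sum_coeff, Polynomial.coeff_monomial] at hcoeff
  -- left side
  rw [Finset.sum_ite_eq' (Finset.range l) 1
    (fun k => t ^ k / (k.factorial : ℂ) * f ((N ^ k) (mul a b))), if_pos h1l] at hcoeff
  -- right side: rewrite as a sum over the product, then over the filtered set
  rw [← Finset.sum_product'] at hcoeff
  rw [← Finset.sum_filter] at hcoeff
  have hfilt : (Finset.range l ×ˢ Finset.range l).filter (fun p : ℕ × ℕ => p.1 + p.2 = 1)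
      = {(0, 1), (1, 0)} := by
    ext ⟨i, j⟩
    simp only [Finset.mem_filter, Finset.mem_product, Finset.mem_range, Finset.mem_insert,
      Finset.mem_singleton, Prod.mk.injEq, Prod.ext_iff]
    omega
  rw [hfilt, Finset.sum_insert (by simp), Finset.sum_singleton] at hcoeff
  simp only [pow_one, pow_zero, Nat.factorial_one, Nat.factorial_zero, Nat.cast_one,
    div_one, one_mul, mul_one] at hcoeff
  simp only [Module.End.one_apply] at hcoeff
  have h2 : f (N (mul a b)) = f ((mul a) (N b)) + f ((mul (N a)) b) := by
    apply mul_left_cancel₀ htne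
    rw [hcoeff]; ring
  simp only [map_sub, map_add]
  linear_combination h2
end
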